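/- arXiv:2507.19816 — 8 statements merged into one kernel-verified Lean document; each statement's English description precedes it below -/
import Mathlib

section
/- Weak duality for the dual rate-distortion bound: let p be a positive probability vector on Fin M, let w : Fin M → Fin N → ℝ be a conditional distribution (w i j ≥ 0 and ∑ j, w i j = 1 for each i) whose expected distortion satisfies ∑ i, ∑ j, p i * w i j * d i j ≤ Δ, and let r j = ∑ i, p i * w i j be its output marginal. If ζ ≥ 0 and a : Fin M → ℝ satisfies a i > 0 for all i and ∑ i, a i * Real.exp (−ζ * d i j) ≤ 1 for every j, then −ζ * Δ + ∑ i, p i * Real.log (a i / p i) ≤ I(p, w), where I(p, w) = ∑ i, ∑ j, p i * w i j * Real.log (w i j / r j) is the mutual information (terms with w i j = 0 contribute 0). -/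
/-- Weak duality for the dual rate-distortion bound: for any conditional
distribution `w` meeting the distortion constraint and any dual-feasible pair `(ζ, a)`
(with inequality constraints), the dual objective is at most the mutual information. -/
theorem dual_rd_weak_duality (M N : ℕ) (hM : 1 ≤ M) (hN : 1 ≤ N)
    (d : Fin M → Fin N → ℝ) (hd : ∀ i j, 0 ≤ d i j)
    (Δ : ℝ) (hΔ : 0 ≤ Δ)
    (p : Fin M → ℝ) (hp : ∀ i, 0 < p i) (hp1 : ∑ i, p i = 1)
    (w : Fin M → Fin N → ℝ) (hw : ∀ i j, 0 ≤ w i j) (hw1 : ∀ i, ∑ j, w i j = 1)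
    (hdist : ∑ i, ∑ j, p i * w i j * d i j ≤ Δ)
    (ζ : ℝ) (hζ : 0 ≤ ζ)
    (a : Fin M → ℝ) (ha : ∀ i, 0 < a i)
    (hfeas : ∀ j, ∑ i, a i * Real.exp (-ζ * d i j) ≤ 1) :
    -ζ * Δ + ∑ i, p i * Real.log (a i / p i) ≤
      ∑ i, ∑ j, p i * w i j * Real.log (w i j / (∑ k, p k * w k j)) := by
  set r : Fin N → ℝ := fun j => ∑ k, p k * w k j with hrdef
  have hr0 : ∀ j, 0 ≤ r j := fun j =>
    Finset.sum_nonneg fun k _ => mul_nonneg (hp k).le (hw k j)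
  -- pointwise key inequality
  have key : ∀ i j, p i * w i j * (Real.log (a i / p i) - ζ * d i j)
      + (p i * w i j - a i * Real.exp (-ζ * d i j) * r j)
      ≤ p i * w i j * Real.log (w i j / r j) := by
    intro i j
    rcases eq_or_lt_of_le (hw i j) with h0 | h0
    · rw [← h0]
      have : 0 ≤ a i * Real.exp (-ζ * d i j) * r j :=
        mul_nonneg (mul_nonneg (ha i).le (Real.exp_pos _).le) (hr0 j)
      rw [neg_mul] at this
      simpa using this
    · have hpw : 0 < p i * w i j := mul_pos (hp i) h0
      have hrj : 0 < r j := by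
        have : p i * w i j ≤ r j :=
          Finset.single_le_sum (f := fun k => p k * w k j)
            (fun k _ => mul_nonneg (hp k).le (hw k j)) (Finset.mem_univ i)
        linarith
      set t : ℝ := a i * Real.exp (-ζ * d i j) * r j / (p i * w i j) with htdef
      have ht : 0 < t := div_pos (mul_pos (mul_pos (ha i) (Real.exp_pos _)) hrj) hpw
      have hlog : Real.log t ≤ t - 1 := Real.log_le_sub_one_of_pos ht
      have hlogt : Real.log t = Real.log (a i) + (-ζ * d i j) + Real.log (r j)
          - Real.log (p i) - Real.log (w i j) := by
        rw [htdef, Real.log_div (ne_of_gt (mul_pos (mul_pos (ha i) (Real.exp_pos _)) hrj)) hpw.ne',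
          Real.log_mul (ne_of_gt (mul_pos (ha i) (Real.exp_pos _))) hrj.ne',
          Real.log_mul (ha i).ne' (Real.exp_pos _).ne',
          Real.log_exp, Real.log_mul (hp i).ne' h0.ne']
        ring
      have h1 : Real.log (a i / p i) = Real.log (a i) - Real.log (p i) :=
        Real.log_div (ha i).ne' (hp i).ne'
      have h2 : Real.log (w i j / r j) = Real.log (w i j) - Real.log (r j) :=
        Real.log_div h0.ne' hrj.ne'
      have hmul : p i * w i j * Real.log t ≤ p i * w i j * (t - 1) :=
        mul_le_mul_of_nonneg_left hlog hpw.le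
      have htval : p i * w i j * t = a i * Real.exp (-ζ * d i j) * r j := by
        rw [htdef]
        field_simp [hpw.ne', (hp i).ne']
      rw [hlogt] at hmul
      rw [h1, h2]
      nlinarith [hmul, htval]
  have main : ∑ i, ∑ j, (p i * w i j * (Real.log (a i / p i) - ζ * d i j)
      + (p i * w i j - a i * Real.exp (-ζ * d i j) * r j))
      ≤ ∑ i, ∑ j, p i * w i j * Real.log (w i j / r j) :=
    Finset.sum_le_sum fun i _ => Finset.sum_le_sum fun j _ => key i j
  have hA : ∑ i, ∑ j, p i * w i j * Real.log (a i / p i)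
      = ∑ i, p i * Real.log (a i / p i) := by
    refine Finset.sum_congr rfl fun i _ => ?_
    rw [Finset.sum_congr rfl (fun j _ => by ring :
      ∀ j ∈ Finset.univ, p i * w i j * Real.log (a i / p i)
        = (p i * Real.log (a i / p i)) * w i j),
      ← Finset.mul_sum, hw1 i, mul_one]
  have hB : ∑ i, ∑ j, p i * w i j = 1 := by
    rw [Finset.sum_congr rfl (fun i _ => by rw [← Finset.mul_sum, hw1 i, mul_one] :
      ∀ i ∈ Finset.univ, ∑ j, p i * w i j = p i), hp1]
  have hC : ∑ i, ∑ j, a i * Real.exp (-ζ * d i j) * r j ≤ 1 := by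
    rw [Finset.sum_comm]
    have : ∀ j, ∑ i, a i * Real.exp (-ζ * d i j) * r j ≤ r j := by
      intro j
      rw [← Finset.sum_mul]
      calc (∑ i, a i * Real.exp (-ζ * d i j)) * r j ≤ 1 * r j :=
            mul_le_mul_of_nonneg_right (hfeas j) (hr0 j)
        _ = r j := one_mul _
    calc ∑ j, ∑ i, a i * Real.exp (-ζ * d i j) * r j ≤ ∑ j, r j :=
          Finset.sum_le_sum fun j _ => this j
      _ = 1 := by rw [hrdef, Finset.sum_comm, hB]
  have hexpand : ∑ i, ∑ j, (p i * w i j * (Real.log (a i / p i) - ζ * d i j)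
      + (p i * w i j - a i * Real.exp (-ζ * d i j) * r j))
      = (∑ i, ∑ j, p i * w i j * Real.log (a i / p i))
        - ζ * (∑ i, ∑ j, p i * w i j * d i j)
        + (∑ i, ∑ j, p i * w i j)
        - (∑ i, ∑ j, a i * Real.exp (-ζ * d i j) * r j) := by
    rw [Finset.mul_sum]
    simp only [Finset.mul_sum, ← Finset.sum_sub_distrib, ← Finset.sum_add_distrib]
    refine Finset.sum_congr rfl fun i _ => Finset.sum_congr rfl fun j _ => by ring
  have hdistζ : ζ * (∑ i, ∑ j, p i * w i j * d i j) ≤ ζ * Δ :=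
    mul_le_mul_of_nonneg_left hdist hζ
  rw [hexpand, hB] at main
  linarith [main, hA, hC]
end

section
/- Negativity of F_E at zero: let q be a positive probability vector on Fin M, Δ ≥ 0 and R real. Suppose ζ ≥ 0 and a : Fin M → ℝ with a i > 0 for all i satisfies ∑ i, a i * Real.exp (−ζ * d i j) ≤ 1 for every j, and suppose there exists a conditional distribution w (w i j ≥ 0, ∑ j, w i j = 1 for each i) with expected distortion ∑ i, ∑ j, q i * w i j * d i j ≤ Δ and mutual information I(q, w) < R, where I(q, w) = ∑ i, ∑ j, q i * w i j * Real.log (w i j / (∑ k, q k * w k j)) (terms with w i j = 0 contribute 0). Then ∑ i, q i * Real.log (a i / q i) − ζ * Δ − R < 0. -/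
/-- Negativity of `F_E` at zero: if `(ζ, a)` is dual-feasible (with inequality
constraints) and there exists a conditional distribution meeting the distortion level `Δ`
whose mutual information is below `R`, then `∑ q i log (a i / q i) − ζΔ − R < 0`. -/
theorem F_E_neg_at_zero (M N : ℕ) (hM : 1 ≤ M) (hN : 1 ≤ N)
    (d : Fin M → Fin N → ℝ) (hd : ∀ i j, 0 ≤ d i j)
    (Δ R : ℝ) (hΔ : 0 ≤ Δ)
    (q : Fin M → ℝ) (hq : ∀ i, 0 < q i) (hq1 : ∑ i, q i = 1)
    (ζ : ℝ) (hζ : 0 ≤ ζ)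
    (a : Fin M → ℝ) (ha : ∀ i, 0 < a i)
    (hfeas : ∀ j, ∑ i, a i * Real.exp (-ζ * d i j) ≤ 1)
    (w : Fin M → Fin N → ℝ) (hw : ∀ i j, 0 ≤ w i j) (hw1 : ∀ i, ∑ j, w i j = 1)
    (hdist : ∑ i, ∑ j, q i * w i j * d i j ≤ Δ)
    (hI : ∑ i, ∑ j, q i * w i j * Real.log (w i j / (∑ k, q k * w k j)) < R) :
    ∑ i, q i * Real.log (a i / q i) - ζ * Δ - R < 0 := by
  set Q : Fin N → ℝ := fun j => ∑ k, q k * w k j with hQdef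
  have hQnn : ∀ j, 0 ≤ Q j := fun j =>
    Finset.sum_nonneg fun k _ => mul_nonneg (hq k).le (hw k j)
  have hQsum : ∑ j, Q j = 1 := by
    rw [hQdef]
    rw [Finset.sum_comm]
    calc ∑ k, ∑ j, q k * w k j = ∑ k, q k * ∑ j, w k j := by
          simp [Finset.mul_sum]
      _ = 1 := by simp [hw1, hq1]
  -- Step 1: spread the left sum over j
  have h1 : ∑ i, q i * Real.log (a i / q i)
      = ∑ i, ∑ j, q i * w i j * Real.log (a i / q i) := by
    refine Finset.sum_congr rfl fun i _ => ?_
    have : ∑ j, q i * w i j * Real.log (a i / q i)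
        = (∑ j, w i j) * (q i * Real.log (a i / q i)) := by
      rw [Finset.sum_mul]
      exact Finset.sum_congr rfl fun j _ => by ring
    rw [this, hw1, one_mul]
  -- Key per-term inequality
  have key : ∀ i j, q i * w i j * Real.log (a i / q i)
      ≤ (a i * Real.exp (-ζ * d i j) * Q j - q i * w i j)
        + ζ * (q i * w i j * d i j)
        + q i * w i j * Real.log (w i j / Q j) := by
    intro i j
    rcases eq_or_lt_of_le (hw i j) with h0 | hpos
    · rw [← h0]
      simp only [mul_zero, zero_mul, sub_zero, add_zero, zero_div]
      have : (0:ℝ) ≤ a i * Real.exp (-ζ * d i j) * Q j :=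
        mul_nonneg (mul_nonneg (ha i).le (Real.exp_pos _).le) (hQnn j)
      simpa using this
    · have hQpos : 0 < Q j := by
        refine lt_of_lt_of_le (mul_pos (hq i) hpos) ?_
        exact Finset.single_le_sum (f := fun k => q k * w k j)
          (fun k _ => mul_nonneg (hq k).le (hw k j)) (Finset.mem_univ i)
      have hqw : (0:ℝ) < q i * w i j := mul_pos (hq i) hpos
      have hdecomp : Real.log (a i / q i)
          = Real.log (a i * Real.exp (-ζ * d i j) * Q j / (q i * w i j))
            + ζ * d i j + Real.log (w i j / Q j) := by
        rw [Real.log_div (ne_of_gt (ha i)) (ne_of_gt (hq i)),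
            Real.log_div (mul_ne_zero (mul_ne_zero (ha i).ne' (Real.exp_ne_zero _)) hQpos.ne') (ne_of_gt hqw),
            Real.log_div (ne_of_gt hpos) (ne_of_gt hQpos),
            Real.log_mul (mul_ne_zero (ha i).ne' (Real.exp_ne_zero _)) (ne_of_gt hQpos),
            Real.log_mul (ne_of_gt (ha i)) (Real.exp_ne_zero _),
            Real.log_mul (ne_of_gt (hq i)) (ne_of_gt hpos),
            Real.log_exp]
        ring
      have hx : (0:ℝ) < a i * Real.exp (-ζ * d i j) * Q j / (q i * w i j) :=
        div_pos (mul_pos (mul_pos (ha i) (Real.exp_pos _)) hQpos) hqw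
      have hlog := Real.log_le_sub_one_of_pos hx
      have hmul : q i * w i j * Real.log (a i * Real.exp (-ζ * d i j) * Q j / (q i * w i j))
          ≤ a i * Real.exp (-ζ * d i j) * Q j - q i * w i j := by
        have := mul_le_mul_of_nonneg_left hlog hqw.le
        calc q i * w i j * Real.log (a i * Real.exp (-ζ * d i j) * Q j / (q i * w i j))
            ≤ q i * w i j * (a i * Real.exp (-ζ * d i j) * Q j / (q i * w i j) - 1) := this
          _ = a i * Real.exp (-ζ * d i j) * Q j - q i * w i j := by
              rw [mul_sub, mul_one, mul_div_assoc', mul_div_cancel_left₀ _ hqw.ne']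
      calc q i * w i j * Real.log (a i / q i)
          = q i * w i j * Real.log (a i * Real.exp (-ζ * d i j) * Q j / (q i * w i j))
            + ζ * (q i * w i j * d i j) + q i * w i j * Real.log (w i j / Q j) := by
            rw [hdecomp]; ring
        _ ≤ _ := by linarith
  -- Sum the first piece
  have hsum1 : ∑ i, ∑ j, (a i * Real.exp (-ζ * d i j) * Q j - q i * w i j) ≤ 0 := by
    have hA : ∑ i, ∑ j, a i * Real.exp (-ζ * d i j) * Q j ≤ 1 := by
      rw [Finset.sum_comm]
      calc ∑ j, ∑ i, a i * Real.exp (-ζ * d i j) * Q j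
          = ∑ j, (∑ i, a i * Real.exp (-ζ * d i j)) * Q j := by
            refine Finset.sum_congr rfl fun j _ => ?_
            rw [Finset.sum_mul]
        _ ≤ ∑ j, 1 * Q j := by
            refine Finset.sum_le_sum fun j _ => ?_
            exact mul_le_mul_of_nonneg_right (hfeas j) (hQnn j)
        _ = 1 := by simp [hQsum]
    have hB : ∑ i, ∑ j, q i * w i j = 1 := by
      calc ∑ i, ∑ j, q i * w i j = ∑ i, q i * ∑ j, w i j := by
            simp [Finset.mul_sum]
        _ = 1 := by simp [hw1, hq1]
    have : ∑ i, ∑ j, (a i * Real.exp (-ζ * d i j) * Q j - q i * w i j)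
        = (∑ i, ∑ j, a i * Real.exp (-ζ * d i j) * Q j) - ∑ i, ∑ j, q i * w i j := by
      simp [Finset.sum_sub_distrib]
    rw [this, hB]
    linarith
  have hmain : ∑ i, ∑ j, q i * w i j * Real.log (a i / q i)
      ≤ ∑ i, ∑ j, ((a i * Real.exp (-ζ * d i j) * Q j - q i * w i j)
        + ζ * (q i * w i j * d i j)
        + q i * w i j * Real.log (w i j / Q j)) :=
    Finset.sum_le_sum fun i _ => Finset.sum_le_sum fun j _ => key i j
  have hsplit : ∑ i, ∑ j, ((a i * Real.exp (-ζ * d i j) * Q j - q i * w i j)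
        + ζ * (q i * w i j * d i j)
        + q i * w i j * Real.log (w i j / Q j))
      = (∑ i, ∑ j, (a i * Real.exp (-ζ * d i j) * Q j - q i * w i j))
        + ζ * (∑ i, ∑ j, q i * w i j * d i j)
        + ∑ i, ∑ j, q i * w i j * Real.log (w i j / Q j) := by
    simp [Finset.sum_add_distrib, Finset.mul_sum]
  have hζd : ζ * (∑ i, ∑ j, q i * w i j * d i j) ≤ ζ * Δ :=
    mul_le_mul_of_nonneg_left hdist hζ
  have hIQ : ∑ i, ∑ j, q i * w i j * Real.log (w i j / Q j) < R := hI
  have := hmain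
  rw [hsplit] at this
  rw [h1]
  linarith
end

section
/- Monotonicity of F_E: let q be a positive probability vector on Fin M, let a : Fin M → ℝ satisfy a i > 0 for all i, and let ζ, Δ, R be real numbers. For λ ≥ 0 set c i λ = Real.exp ((λ * Real.log (a i) + Real.log (q i)) / (λ + 1)), S λ = ∑ i, c i λ, and F_E λ = (1 / (λ + 1)) * (∑ i, c i λ * Real.log (a i / q i)) / S λ + Real.log (S λ) − ζ * Δ − R. Then F_E is monotone nondecreasing on the interval [0, ∞). -/
/-!
Put `s = 1/(λ+1)`, `b = log a` and `d = log (a/q)`. Then `c i λ = exp (b i - s d i)`, so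
`p = c / S` is the Gibbs distribution of the potential `b - s d`, and `F_E + ζΔ + R` is
`G p := ∑ p i (b i - log p i)`. By Gibbs' inequality `p` maximises `G r - s ∑ r i d i` over
probability vectors `r`. Comparing the maximisers for two values `s < t`, the mean of `d`
can only decrease as `s` grows, and then (as `s ≥ 0`) so does `G`. Since `s` decreases in `λ`,
`F_E` increases.
-/

open Finset Real

section Softmax

variable {ι : Type*} [Fintype ι]

theorem sum_mul_sub_log_le_log_sum_exp (p u : ι → ℝ) (hp : ∀ i, 0 < p i) (hp1 : ∑ i, p i = 1) :
    ∑ i, p i * (u i - log (p i)) ≤ log (∑ i, exp (u i)) := by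
  have jensen := strictConcaveOn_log_Ioi.concaveOn.le_map_sum (t := univ) (w := p)
    (p := fun i => exp (u i) / p i) (fun i _ => (hp i).le) hp1
    (fun i _ => div_pos (exp_pos _) (hp i))
  simp only [smul_eq_mul] at jensen
  calc ∑ i, p i * (u i - log (p i))
      = ∑ i, p i * log (exp (u i) / p i) := by
        refine sum_congr rfl fun i _ => ?_
        rw [log_div (exp_ne_zero _) (hp i).ne', log_exp]
    _ ≤ log (∑ i, p i * (exp (u i) / p i)) := jensen
    _ = log (∑ i, exp (u i)) := by
        refine congrArg log (sum_congr rfl fun i _ => ?_)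
        exact mul_div_cancel₀ _ (hp i).ne'

noncomputable def softmax (u : ι → ℝ) (i : ι) : ℝ := exp (u i) / ∑ j, exp (u j)

theorem sum_softmax_mul (u f : ι → ℝ) :
    ∑ i, softmax u i * f i = (∑ i, exp (u i) * f i) / ∑ i, exp (u i) := by
  simp only [softmax, sum_div, div_mul_eq_mul_div]

variable [Nonempty ι] (u : ι → ℝ)

theorem sum_exp_pos : 0 < ∑ i, exp (u i) :=
  sum_pos (fun _ _ => exp_pos _) univ_nonempty

theorem softmax_pos (i : ι) : 0 < softmax u i :=
  div_pos (exp_pos _) (sum_exp_pos u)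

theorem sum_softmax : ∑ i, softmax u i = 1 := by
  simpa [div_self (sum_exp_pos u).ne'] using sum_softmax_mul u 1

theorem log_softmax (i : ι) : log (softmax u i) = u i - log (∑ j, exp (u j)) := by
  rw [softmax, log_div (exp_ne_zero _) (sum_exp_pos u).ne', log_exp]

theorem sum_mul_sub_log_le_softmax (r : ι → ℝ) (hr : ∀ i, 0 < r i) (hr1 : ∑ i, r i = 1) :
    ∑ i, r i * (u i - log (r i)) ≤ ∑ i, softmax u i * (u i - log (softmax u i)) := by
  have hp : ∑ i, softmax u i * (u i - log (softmax u i)) = log (∑ i, exp (u i)) := by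
    simp_rw [log_softmax, sub_sub_cancel, ← sum_mul, sum_softmax, one_mul]
  exact hp ▸ sum_mul_sub_log_le_log_sum_exp r u hr hr1

end Softmax

section Tilted

variable {ι : Type*} [Fintype ι] [Nonempty ι] (b d : ι → ℝ)

noncomputable def tilted (s : ℝ) : ι → ℝ := softmax fun i => b i - s * d i

noncomputable def tiltedValue (s : ℝ) : ℝ := ∑ i, tilted b d s i * (b i - log (tilted b d s i))

theorem tiltedValue_eq (s : ℝ) :
    tiltedValue b d s =
      s * (∑ i, exp (b i - s * d i) * d i) / (∑ i, exp (b i - s * d i)) +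
        log (∑ i, exp (b i - s * d i)) := by
  have log_tilted : ∀ i, b i - log (tilted b d s i) = s * d i + log (∑ i, exp (b i - s * d i)) := by
    intro i
    rw [tilted, log_softmax]
    ring
  simp only [tiltedValue, log_tilted, mul_add, sum_add_distrib, ← sum_mul, mul_left_comm _ s,
    ← mul_sum]
  rw [tilted, sum_softmax_mul, sum_softmax, one_mul, mul_div_assoc]

theorem antitoneOn_tiltedValue : AntitoneOn (tiltedValue b d) (Set.Ici 0) := by
  intro s hs t _ hst
  set G : (ι → ℝ) → ℝ := fun r => ∑ i, r i * (b i - log (r i))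
  set D : (ι → ℝ) → ℝ := fun r => ∑ i, r i * d i
  have optimal : ∀ s r, (∀ i, 0 < r i) → ∑ i, r i = 1 →
      G r - s * D r ≤ G (tilted b d s) - s * D (tilted b d s) := by
    intro s r hr hr1
    have expand : ∀ r : ι → ℝ, G r - s * D r = ∑ i, r i * (b i - s * d i - log (r i)) := by
      intro r
      simp only [G, D, mul_sum, ← sum_sub_distrib]
      exact sum_congr rfl fun i _ => by ring
    rw [expand, expand]
    exact sum_mul_sub_log_le_softmax _ r hr hr1
  have hs_opt := optimal s (tilted b d t) (softmax_pos _) (sum_softmax _)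
  have ht_opt := optimal t (tilted b d s) (softmax_pos _) (sum_softmax _)
  show G (tilted b d t) ≤ G (tilted b d s)
  obtain rfl | hlt := hst.eq_or_lt
  · linarith
  -- adding the two optimality inequalities gives `(t - s) * (D_t - D_s) ≤ 0`
  have mean_anti : D (tilted b d t) ≤ D (tilted b d s) := by nlinarith
  nlinarith [mul_nonneg (Set.mem_Ici.mp hs) (sub_nonneg.mpr mean_anti)]

end Tilted

theorem F_E_monotone_general (M : ℕ) (hM : 1 ≤ M)
    (q : Fin M → ℝ) (hq : ∀ i, 0 < q i)
    (a : Fin M → ℝ) (ha : ∀ i, 0 < a i)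
    (ζ Δ R : ℝ) :
    MonotoneOn (fun lam : ℝ =>
      (1 / (lam + 1)) *
          (∑ i, Real.exp ((lam * Real.log (a i) + Real.log (q i)) / (lam + 1)) *
            Real.log (a i / q i)) /
          (∑ i, Real.exp ((lam * Real.log (a i) + Real.log (q i)) / (lam + 1))) +
        Real.log (∑ i, Real.exp ((lam * Real.log (a i) + Real.log (q i)) / (lam + 1))) -
        ζ * Δ - R)
      (Set.Ici (0 : ℝ)) := by
  have : Nonempty (Fin M) := ⟨⟨0, hM⟩⟩
  set b : Fin M → ℝ := fun i => log (a i)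
  set d : Fin M → ℝ := fun i => log (a i / q i)
  have potential : ∀ lam : ℝ, 0 ≤ lam → ∀ i,
      (lam * log (a i) + log (q i)) / (lam + 1) = b i - 1 / (lam + 1) * d i := by
    intro lam hlam i
    simp only [b, d, log_div (ha i).ne' (hq i).ne']
    field_simp
    ring
  refine MonotoneOn.congr (f₁ := fun lam => tiltedValue b d (1 / (lam + 1)) - ζ * Δ - R)
    (fun x hx y hy hxy => ?_) (fun lam hlam => ?_)
  · have hx : 0 ≤ x := hx
    have hy : 0 ≤ y := hy
    have := antitoneOn_tiltedValue b d (by positivity : 0 ≤ 1 / (y + 1))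
      (by positivity : 0 ≤ 1 / (x + 1)) (one_div_le_one_div_of_le (by positivity) (by linarith))
    dsimp only
    linarith
  · simp only [potential lam hlam, tiltedValue_eq]
    rfl

/-- Monotonicity of `F_E`: the function
`λ ↦ (1/(λ+1)) * (∑ c i λ * log (a i / q i)) / S λ + log (S λ) − ζΔ − R`,
with `c i λ = exp((λ log (a i) + log (q i)) / (λ+1))` and `S λ = ∑ c i λ`,
is monotone nondecreasing on `[0, ∞)`. -/
theorem F_E_monotone (M : ℕ) (hM : 1 ≤ M)
    (q : Fin M → ℝ) (hq : ∀ i, 0 < q i) (hq1 : ∑ i, q i = 1)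
    (a : Fin M → ℝ) (ha : ∀ i, 0 < a i)
    (ζ Δ R : ℝ) :
    MonotoneOn (fun lam : ℝ =>
      (1 / (lam + 1)) *
          (∑ i, Real.exp ((lam * Real.log (a i) + Real.log (q i)) / (lam + 1)) *
            Real.log (a i / q i)) /
          (∑ i, Real.exp ((lam * Real.log (a i) + Real.log (q i)) / (lam + 1))) +
        Real.log (∑ i, Real.exp ((lam * Real.log (a i) + Real.log (q i)) / (lam + 1))) -
        ζ * Δ - R)
      (Set.Ici (0 : ℝ)) :=
  F_E_monotone_general M hM q hq a ha ζ Δ R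
end

section
/- Monotonicity of F_R: let q be a positive probability vector on Fin M, let a : Fin M → ℝ satisfy a i > 0 for all i, and let E be a real number. For ξ ≥ 0 set c i ξ = Real.exp ((Real.log (a i) + ξ * Real.log (q i)) / (1 + ξ)), S ξ = ∑ i, c i ξ, and F_R ξ = (1 / (1 + ξ)) * (∑ i, c i ξ * Real.log (a i / q i)) / S ξ − Real.log (S ξ) − E. Then F_R is monotone nonincreasing on the interval [0, ∞). -/
/-!
Put `u = 1 / (1 + ξ)` and `L i = log (a i / q i)`. Then `c i ξ = q i * exp (u * L i)`, so
`F_R ξ + E = u ψ'(u) - ψ(u)` for `ψ u = log (∑ i, q i * exp (u * L i))`. The derivative of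
`u ψ'(u) - ψ(u)` is `u ψ''(u)`, which is nonnegative for `u ≥ 0` because `ψ'' ≥ 0` by
Cauchy–Schwarz. Hence `F_R` increases with `u`, which decreases with `ξ`.
-/

open Real Finset

theorem monotoneOn_mul_deriv_sub {f f' f'' : ℝ → ℝ}
    (hf : ∀ x, HasDerivAt f (f' x) x) (hf' : ∀ x, HasDerivAt f' (f'' x) x)
    (hf'' : ∀ x, 0 < x → 0 ≤ f'' x) :
    MonotoneOn (fun x => x * f' x - f x) (Set.Ici 0) := by
  have hderiv : ∀ x, HasDerivAt (fun x => x * f' x - f x) (x * f'' x) x := fun x =>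
    (((hasDerivAt_id' x).mul (hf' x)).sub (hf x)).congr_deriv (by ring)
  refine monotoneOn_of_hasDerivWithinAt_nonneg (convex_Ici 0)
    (fun x _ => (hderiv x).continuousAt.continuousWithinAt)
    (fun x _ => (hderiv x).hasDerivWithinAt) fun x hx => ?_
  rw [interior_Ici] at hx
  exact mul_nonneg (le_of_lt hx) (hf'' x hx)

section ExpMoment

variable {ι : Type*} [Fintype ι] (w L : ι → ℝ)

noncomputable def expMoment (k : ℕ) (u : ℝ) : ℝ := ∑ i, w i * exp (u * L i) * L i ^ k

theorem hasDerivAt_expMoment (k : ℕ) (u : ℝ) :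
    HasDerivAt (expMoment w L k) (expMoment w L (k + 1) u) u := by
  unfold expMoment
  exact (HasDerivAt.fun_sum fun i _ =>
    ((((hasDerivAt_id' u).mul_const (L i)).exp).const_mul (w i)).mul_const (L i ^ k)).congr_deriv
      (sum_congr rfl fun i _ => by ring)

variable {w}

theorem expMoment_zero_pos [Nonempty ι] (hw : ∀ i, 0 < w i) (u : ℝ) : 0 < expMoment w L 0 u :=
  sum_pos (fun i _ => by simpa using mul_pos (hw i) (exp_pos _)) univ_nonempty

theorem expMoment_one_sq_le (hw : ∀ i, 0 ≤ w i) (u : ℝ) :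
    expMoment w L 1 u ^ 2 ≤ expMoment w L 0 u * expMoment w L 2 u :=
  sum_sq_le_sum_mul_sum_of_sq_le_mul _
    (fun i _ => by simpa using mul_nonneg (hw i) (exp_pos _).le)
    (fun i _ => mul_nonneg (mul_nonneg (hw i) (exp_pos _).le) (sq_nonneg _))
    fun i _ => le_of_eq (by ring)

theorem monotoneOn_mul_expMoment_div_sub_log [Nonempty ι] (hw : ∀ i, 0 < w i) :
    MonotoneOn (fun u => u * (expMoment w L 1 u / expMoment w L 0 u) - log (expMoment w L 0 u))
      (Set.Ici 0) := by
  have hpos := expMoment_zero_pos L hw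
  refine monotoneOn_mul_deriv_sub (f'' := fun u =>
      (expMoment w L 2 u * expMoment w L 0 u - expMoment w L 1 u * expMoment w L 1 u) /
        expMoment w L 0 u ^ 2)
    (fun u => (hasDerivAt_expMoment w L 0 u).log (hpos u).ne')
    (fun u => (hasDerivAt_expMoment w L 1 u).div (hasDerivAt_expMoment w L 0 u) (hpos u).ne')
    fun u _ => div_nonneg ?_ (sq_nonneg _)
  nlinarith [expMoment_one_sq_le L (fun i => (hw i).le) u]

end ExpMoment

theorem exp_div_one_add_eq_mul_exp {a q : ℝ} (ha : 0 < a) (hq : 0 < q) {ξ : ℝ} (hξ : 1 + ξ ≠ 0) :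
    exp ((log a + ξ * log q) / (1 + ξ)) = q * exp (1 / (1 + ξ) * log (a / q)) := by
  rw [log_div ha.ne' hq.ne', ← exp_log hq, ← exp_add, log_exp]
  congr 1
  field_simp
  ring

theorem F_R_antitone_general (M : ℕ) (hM : 1 ≤ M)
    (q : Fin M → ℝ) (hq : ∀ i, 0 < q i)
    (a : Fin M → ℝ) (ha : ∀ i, 0 < a i)
    (E : ℝ) :
    AntitoneOn (fun ξ : ℝ =>
      (1 / (1 + ξ)) *
          (∑ i, Real.exp ((Real.log (a i) + ξ * Real.log (q i)) / (1 + ξ)) *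
            Real.log (a i / q i)) /
          (∑ i, Real.exp ((Real.log (a i) + ξ * Real.log (q i)) / (1 + ξ))) -
        Real.log (∑ i, Real.exp ((Real.log (a i) + ξ * Real.log (q i)) / (1 + ξ))) - E)
      (Set.Ici (0 : ℝ)) := by
  have : Nonempty (Fin M) := ⟨⟨0, hM⟩⟩
  have hsum : ∀ ξ : ℝ, 0 ≤ ξ → ∀ k,
      ∑ i, exp ((log (a i) + ξ * log (q i)) / (1 + ξ)) * log (a i / q i) ^ k =
        expMoment q (fun i => log (a i / q i)) k (1 / (1 + ξ)) := fun ξ hξ k =>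
    sum_congr rfl fun i _ => by
      rw [exp_div_one_add_eq_mul_exp (ha i) (hq i) (by positivity)]
  intro x hx y hy hxy
  rw [Set.mem_Ici] at hx hy
  have hmono := monotoneOn_mul_expMoment_div_sub_log (fun i => log (a i / q i)) hq
    (Set.mem_Ici.2 (by positivity : (0 : ℝ) ≤ 1 / (1 + y)))
    (Set.mem_Ici.2 (by positivity : (0 : ℝ) ≤ 1 / (1 + x)))
    (one_div_le_one_div_of_le (by positivity) (by linarith))
  have h0 := fun ξ hξ => hsum ξ hξ 0
  have h1 := fun ξ hξ => hsum ξ hξ 1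
  simp only [pow_one, pow_zero, mul_one] at h0 h1
  simp only [h0 x hx, h0 y hy, h1 x hx, h1 y hy, mul_div_assoc]
  linarith

/-- Monotonicity of `F_R`: the function
`ξ ↦ (1/(1+ξ)) * (∑ c i ξ * log (a i / q i)) / S ξ − log (S ξ) − E`,
with `c i ξ = exp((log (a i) + ξ log (q i)) / (1+ξ))` and `S ξ = ∑ c i ξ`,
is monotone nonincreasing on `[0, ∞)`. -/
theorem F_R_antitone (M : ℕ) (hM : 1 ≤ M)
    (q : Fin M → ℝ) (hq : ∀ i, 0 < q i) (hq1 : ∑ i, q i = 1)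
    (a : Fin M → ℝ) (ha : ∀ i, 0 < a i)
    (E : ℝ) :
    AntitoneOn (fun ξ : ℝ =>
      (1 / (1 + ξ)) *
          (∑ i, Real.exp ((Real.log (a i) + ξ * Real.log (q i)) / (1 + ξ)) *
            Real.log (a i / q i)) /
          (∑ i, Real.exp ((Real.log (a i) + ξ * Real.log (q i)) / (1 + ξ))) -
        Real.log (∑ i, Real.exp ((Real.log (a i) + ξ * Real.log (q i)) / (1 + ξ))) - E)
      (Set.Ici (0 : ℝ)) :=
  F_R_antitone_general M hM q hq a ha E
end

section
/- Softmax gap identity for the inverse-function Lagrangian: let q be a positive probability vector on Fin M, let a : Fin M → ℝ satisfy a i > 0 for all i, and let ξ ≥ 0. Define c i = Real.exp ((Real.log (a i) + ξ * Real.log (q i)) / (1 + ξ)) and p' i = c i / (∑ k, c k). Then p' is a positive probability vector on Fin M, and for every positive probability vector p on Fin M: (∑ i, p' i * Real.log (a i / p' i) − ξ * D(p'‖q)) − (∑ i, p i * Real.log (a i / p i) − ξ * D(p‖q)) = (1 + ξ) * D(p‖p'). -/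
/-!
Taking logarithms, `log a i + ξ log q i = (1 + ξ) (log p' i + log Z)` with `Z = ∑ k, c k`.
Substituting this into the Lagrangian of any probability vector `p` gives
`(1 + ξ) (log Z - D(p‖p'))`, so the Lagrangian is maximised at `p'` with value `(1 + ξ) log Z`,
and the gap is `(1 + ξ) D(p‖p')`.
-/

open Finset Real

noncomputable def inverseFunctionLagrangian {ι : Type*} [Fintype ι] (a q : ι → ℝ) (ξ : ℝ)
    (p : ι → ℝ) : ℝ :=
  ∑ i, p i * log (a i / p i) - ξ * ∑ i, p i * log (p i / q i)

section

variable {ι : Type*} [Fintype ι]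

theorem div_sum_pos [Nonempty ι] {c : ι → ℝ} (hc : ∀ i, 0 < c i) (i : ι) :
    0 < c i / ∑ k, c k :=
  div_pos (hc i) (sum_pos (fun k _ => hc k) univ_nonempty)

theorem sum_div_sum_self {c : ι → ℝ} (hc : ∑ k, c k ≠ 0) : ∑ i, c i / ∑ k, c k = 1 := by
  rw [← sum_div, div_self hc]

theorem log_add_mul_log_eq_of_softmax {a q c : ι → ℝ} {ξ : ℝ} (hξ : 1 + ξ ≠ 0)
    (hc : ∀ i, c i = exp ((log (a i) + ξ * log (q i)) / (1 + ξ))) (hZ : 0 < ∑ k, c k) (i : ι) :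
    log (a i) + ξ * log (q i) = (1 + ξ) * (log (c i / ∑ k, c k) + log (∑ k, c k)) := by
  rw [log_div (hc i ▸ (exp_pos _).ne') hZ.ne', hc, log_exp]
  field_simp
  ring

theorem inverseFunctionLagrangian_eq {a q r p : ι → ℝ} {ξ L : ℝ}
    (ha : ∀ i, 0 < a i) (hq : ∀ i, 0 < q i) (hr : ∀ i, 0 < r i)
    (hlog : ∀ i, log (a i) + ξ * log (q i) = (1 + ξ) * (log (r i) + L))
    (hp : ∀ i, 0 < p i) (hp1 : ∑ i, p i = 1) :
    inverseFunctionLagrangian a q ξ p = (1 + ξ) * (L - ∑ i, p i * log (p i / r i)) := by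
  have hterm : ∀ i, p i * log (a i / p i) - ξ * (p i * log (p i / q i)) =
      (1 + ξ) * (p i * L - p i * log (p i / r i)) := by
    intro i
    rw [log_div (ha i).ne' (hp i).ne', log_div (hp i).ne' (hq i).ne',
      log_div (hp i).ne' (hr i).ne']
    linear_combination p i * hlog i
  calc inverseFunctionLagrangian a q ξ p
      = ∑ i, (p i * log (a i / p i) - ξ * (p i * log (p i / q i))) := by
        rw [inverseFunctionLagrangian, sum_sub_distrib, mul_sum]
    _ = ∑ i, (1 + ξ) * (p i * L - p i * log (p i / r i)) := sum_congr rfl fun i _ => hterm i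
    _ = (1 + ξ) * (L - ∑ i, p i * log (p i / r i)) := by
        rw [← mul_sum, sum_sub_distrib, ← sum_mul, hp1, one_mul]

end

theorem softmax_gap_inverse_function_general (M : ℕ) (hM : 1 ≤ M)
    (q : Fin M → ℝ) (hq : ∀ i, 0 < q i)
    (a : Fin M → ℝ) (ha : ∀ i, 0 < a i)
    (ξ : ℝ) (hξ : 0 ≤ ξ)
    (c p' : Fin M → ℝ)
    (hc : ∀ i, c i = Real.exp ((Real.log (a i) + ξ * Real.log (q i)) / (1 + ξ)))
    (hp' : ∀ i, p' i = c i / ∑ k, c k) :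
    ((∀ i, 0 < p' i) ∧ ∑ i, p' i = 1) ∧
    ∀ p : Fin M → ℝ, (∀ i, 0 < p i) → (∑ i, p i = 1) →
      ((∑ i, p' i * Real.log (a i / p' i)) - ξ * ∑ i, p' i * Real.log (p' i / q i)) -
        ((∑ i, p i * Real.log (a i / p i)) - ξ * ∑ i, p i * Real.log (p i / q i)) =
      (1 + ξ) * ∑ i, p i * Real.log (p i / p' i) := by
  have : Nonempty (Fin M) := ⟨⟨0, hM⟩⟩
  have hcpos : ∀ i, 0 < c i := fun i => hc i ▸ exp_pos _
  have hZ : 0 < ∑ k, c k := sum_pos (fun k _ => hcpos k) univ_nonempty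
  have hp'eq : p' = fun i => c i / ∑ k, c k := funext hp'
  have hp'pos : ∀ i, 0 < p' i := hp'eq ▸ div_sum_pos hcpos
  have hp'1 : ∑ i, p' i = 1 := hp'eq ▸ sum_div_sum_self hZ.ne'
  have hlog : ∀ i, log (a i) + ξ * log (q i) = (1 + ξ) * (log (p' i) + log (∑ k, c k)) :=
    hp'eq ▸ log_add_mul_log_eq_of_softmax (by linarith) hc hZ
  refine ⟨⟨hp'pos, hp'1⟩, fun p hp hp1 => ?_⟩
  have hself : ∑ i, p' i * log (p' i / p' i) = 0 := by
    simp [div_self (hp'pos _).ne']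
  change inverseFunctionLagrangian a q ξ p' - inverseFunctionLagrangian a q ξ p = _
  rw [inverseFunctionLagrangian_eq ha hq hp'pos hlog hp'pos hp'1,
    inverseFunctionLagrangian_eq ha hq hp'pos hlog hp hp1, hself]
  ring

/-- Softmax gap identity for the inverse-function Lagrangian: with
`c i = exp((log (a i) + ξ log (q i)) / (1+ξ))` and `p' i = c i / ∑ k, c k`, the vector `p'`
is a positive probability vector and, for every positive probability vector `p`, the gap of
the Lagrangian `∑ (·) log (a/·) − ξ D(·‖q)` between `p'` and `p` equals `(1+ξ) D(p‖p')`. -/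
theorem softmax_gap_inverse_function (M : ℕ) (hM : 1 ≤ M)
    (q : Fin M → ℝ) (hq : ∀ i, 0 < q i) (hq1 : ∑ i, q i = 1)
    (a : Fin M → ℝ) (ha : ∀ i, 0 < a i)
    (ξ : ℝ) (hξ : 0 ≤ ξ)
    (c p' : Fin M → ℝ)
    (hc : ∀ i, c i = Real.exp ((Real.log (a i) + ξ * Real.log (q i)) / (1 + ξ)))
    (hp' : ∀ i, p' i = c i / ∑ k, c k) :
    ((∀ i, 0 < p' i) ∧ ∑ i, p' i = 1) ∧
    ∀ p : Fin M → ℝ, (∀ i, 0 < p i) → (∑ i, p i = 1) →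
      ((∑ i, p' i * Real.log (a i / p' i)) - ξ * ∑ i, p' i * Real.log (p' i / q i)) -
        ((∑ i, p i * Real.log (a i / p i)) - ξ * ∑ i, p i * Real.log (p i / q i)) =
      (1 + ξ) * ∑ i, p i * Real.log (p i / p' i) :=
  softmax_gap_inverse_function_general M hM q hq a ha ξ hξ c p' hc hp'
end

section
/- Dual-variable difference equals a weighted sum of posterior Kullback–Leibler divergences: let ζ ∈ ℝ, let p and p̃ be positive probability vectors on Fin M, let r be a positive BA fixed point for p (with associated dual variable a and posterior v), and let r' be a positive BA fixed point for p̃ (with associated dual variable a' and posterior v'). Then ∑ i, p̃ i * Real.log (a' i / a i) = ∑ j, r' j * (∑ i, v' i j * Real.log (v' i j / v i j)), and this quantity is ≥ 0. -/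
/-- Gibbs' inequality for positive vectors with equal sums. -/
lemma gibbs_aux {ι : Type*} (s : Finset ι) (f g : ι → ℝ)
    (hf : ∀ i ∈ s, 0 < f i) (hg : ∀ i ∈ s, 0 < g i)
    (hsum : ∑ i ∈ s, f i = ∑ i ∈ s, g i) :
    0 ≤ ∑ i ∈ s, f i * Real.log (f i / g i) := by
  have key : ∀ i ∈ s, f i - g i ≤ f i * Real.log (f i / g i) := by
    intro i hi
    have hfi := hf i hi
    have hgi := hg i hi
    have h1 : Real.log (g i / f i) ≤ g i / f i - 1 :=
      Real.log_le_sub_one_of_pos (by positivity)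
    have h2 : Real.log (f i / g i) = - Real.log (g i / f i) := by
      rw [← Real.log_inv]
      congr 1
      field_simp
    rw [h2]
    have := mul_le_mul_of_nonneg_left h1 hfi.le
    have hfne : f i ≠ 0 := hfi.ne'
    nlinarith [this, mul_div_cancel₀ (g i) hfne]
  calc (0:ℝ) = ∑ i ∈ s, (f i - g i) := by rw [Finset.sum_sub_distrib, hsum]; ring
    _ ≤ _ := Finset.sum_le_sum key

/-- Dual-variable difference equals a weighted sum of posterior KL divergences:
for BA fixed points `r` (for `p`, with dual variable `a` and posterior `v`) and `r'` (for `p̃`,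
with dual variable `a'` and posterior `v'`),
`∑ i, p̃ i * log (a' i / a i) = ∑ j, r' j * ∑ i, v' i j * log (v' i j / v i j) ≥ 0`. -/
theorem dual_diff_eq_posterior_kl (M N : ℕ) (hM : 1 ≤ M) (hN : 1 ≤ N)
    (d : Fin M → Fin N → ℝ) (hd : ∀ i j, 0 ≤ d i j)
    (ζ : ℝ)
    (p pt : Fin M → ℝ)
    (hp : ∀ i, 0 < p i) (hp1 : ∑ i, p i = 1)
    (hpt : ∀ i, 0 < pt i) (hpt1 : ∑ i, pt i = 1)
    (r : Fin N → ℝ) (hr : ∀ j, 0 < r j) (hr1 : ∑ j, r j = 1)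
    (hrfix : ∀ j, r j =
      ∑ i, p i * Real.exp (-ζ * d i j) * r j / (∑ k, Real.exp (-ζ * d i k) * r k))
    (a : Fin M → ℝ) (haa : ∀ i, a i = p i / (∑ j, Real.exp (-ζ * d i j) * r j))
    (v : Fin M → Fin N → ℝ)
    (hv : ∀ i j, v i j =
      p i * (Real.exp (-ζ * d i j) * r j / (∑ k, Real.exp (-ζ * d i k) * r k)) / r j)
    (r' : Fin N → ℝ) (hr' : ∀ j, 0 < r' j) (hr'1 : ∑ j, r' j = 1)
    (hr'fix : ∀ j, r' j =
      ∑ i, pt i * Real.exp (-ζ * d i j) * r' j / (∑ k, Real.exp (-ζ * d i k) * r' k))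
    (a' : Fin M → ℝ) (ha' : ∀ i, a' i = pt i / (∑ j, Real.exp (-ζ * d i j) * r' j))
    (v' : Fin M → Fin N → ℝ)
    (hv' : ∀ i j, v' i j =
      pt i * (Real.exp (-ζ * d i j) * r' j / (∑ k, Real.exp (-ζ * d i k) * r' k)) / r' j) :
    (∑ i, pt i * Real.log (a' i / a i) =
      ∑ j, r' j * ∑ i, v' i j * Real.log (v' i j / v i j)) ∧
    0 ≤ ∑ i, pt i * Real.log (a' i / a i) := by
  have hNne : Nonempty (Fin N) := ⟨⟨0, hN⟩⟩
  have hepos : ∀ (i : Fin M) (j : Fin N), 0 < Real.exp (-ζ * d i j) := fun i j => Real.exp_pos _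
  have hZ : ∀ i, 0 < ∑ k, Real.exp (-ζ * d i k) * r k := fun i =>
    Finset.sum_pos (fun k _ => mul_pos (hepos i k) (hr k)) Finset.univ_nonempty
  have hZ' : ∀ i, 0 < ∑ k, Real.exp (-ζ * d i k) * r' k := fun i =>
    Finset.sum_pos (fun k _ => mul_pos (hepos i k) (hr' k)) Finset.univ_nonempty
  have hva : ∀ i j, v i j = a i * Real.exp (-ζ * d i j) := by
    intro i j
    rw [hv i j, haa i]
    have h1 := (hZ i).ne'
    have h2 := (hr j).ne'
    field_simp
  have hva' : ∀ i j, v' i j = a' i * Real.exp (-ζ * d i j) := by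
    intro i j
    rw [hv' i j, ha' i]
    have h1 := (hZ' i).ne'
    have h2 := (hr' j).ne'
    field_simp
  have hapos : ∀ i, 0 < a i := fun i => by rw [haa i]; exact div_pos (hp i) (hZ i)
  have ha'pos : ∀ i, 0 < a' i := fun i => by rw [ha' i]; exact div_pos (hpt i) (hZ' i)
  have hvpos : ∀ i j, 0 < v i j := fun i j => by rw [hva]; exact mul_pos (hapos i) (hepos i j)
  have hv'pos : ∀ i j, 0 < v' i j := fun i j => by rw [hva']; exact mul_pos (ha'pos i) (hepos i j)
  have hratio : ∀ i j, v' i j / v i j = a' i / a i := by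
    intro i j
    rw [hva, hva', mul_div_mul_right _ _ (hepos i j).ne']
  have hterm : ∀ i j, p i * Real.exp (-ζ * d i j) * r j / (∑ k, Real.exp (-ζ * d i k) * r k)
      = v i j * r j := by
    intro i j
    rw [hva, haa]
    have h1 := (hZ i).ne'
    field_simp
  have hterm' : ∀ i j, pt i * Real.exp (-ζ * d i j) * r' j / (∑ k, Real.exp (-ζ * d i k) * r' k)
      = v' i j * r' j := by
    intro i j
    rw [hva', ha']
    have h1 := (hZ' i).ne'
    field_simp
  have hvsum : ∀ j, ∑ i, v i j = 1 := by
    intro j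
    have h2 : r j = (∑ i, v i j) * r j := by
      calc r j = ∑ i, p i * Real.exp (-ζ * d i j) * r j / (∑ k, Real.exp (-ζ * d i k) * r k) :=
            hrfix j
        _ = ∑ i, v i j * r j := Finset.sum_congr rfl fun i _ => hterm i j
        _ = (∑ i, v i j) * r j := (Finset.sum_mul _ _ _).symm
    have h3 : (∑ i, v i j) * r j = 1 * r j := by linarith
    exact mul_right_cancel₀ (hr j).ne' h3
  have hv'sum : ∀ j, ∑ i, v' i j = 1 := by
    intro j
    have h2 : r' j = (∑ i, v' i j) * r' j := by
      calc r' j = ∑ i, pt i * Real.exp (-ζ * d i j) * r' j / (∑ k, Real.exp (-ζ * d i k) * r' k) :=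
            hr'fix j
        _ = ∑ i, v' i j * r' j := Finset.sum_congr rfl fun i _ => hterm' i j
        _ = (∑ i, v' i j) * r' j := (Finset.sum_mul _ _ _).symm
    have h3 : (∑ i, v' i j) * r' j = 1 * r' j := by linarith
    exact mul_right_cancel₀ (hr' j).ne' h3
  have hmarg : ∀ i, ∑ j, r' j * v' i j = pt i := by
    intro i
    have h1 := (hZ' i).ne'
    calc ∑ j, r' j * v' i j
        = ∑ j, (pt i / (∑ k, Real.exp (-ζ * d i k) * r' k)) * (Real.exp (-ζ * d i j) * r' j) := by
          refine Finset.sum_congr rfl fun j _ => ?_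
          rw [hva', ha' i]; ring
      _ = (pt i / (∑ k, Real.exp (-ζ * d i k) * r' k)) * ∑ j, Real.exp (-ζ * d i j) * r' j :=
          (Finset.mul_sum _ _ _).symm
      _ = pt i := div_mul_cancel₀ _ h1
  have heq : ∑ i, pt i * Real.log (a' i / a i) =
      ∑ j, r' j * ∑ i, v' i j * Real.log (v' i j / v i j) := by
    calc ∑ i, pt i * Real.log (a' i / a i)
        = ∑ i, ∑ j, r' j * (v' i j * Real.log (v' i j / v i j)) := by
          refine Finset.sum_congr rfl fun i _ => ?_
          have h4 : ∑ j, r' j * (v' i j * Real.log (v' i j / v i j))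
              = ∑ j, (r' j * v' i j) * Real.log (a' i / a i) := by
            refine Finset.sum_congr rfl fun j _ => ?_
            rw [hratio]; ring
          rw [h4, ← Finset.sum_mul, hmarg]
      _ = ∑ j, ∑ i, r' j * (v' i j * Real.log (v' i j / v i j)) := Finset.sum_comm
      _ = ∑ j, r' j * ∑ i, v' i j * Real.log (v' i j / v i j) := by
          refine Finset.sum_congr rfl fun j _ => ?_
          rw [Finset.mul_sum]
  refine ⟨heq, ?_⟩
  rw [heq]
  refine Finset.sum_nonneg fun j _ => mul_nonneg (hr' j).le ?_
  exact gibbs_aux Finset.univ (fun i => v' i j) (fun i => v i j)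
    (fun i _ => hv'pos i j) (fun i _ => hvpos i j) (by rw [hv'sum, hvsum])
end

section
/- Per-iteration descent for the AM-CD algorithm for the inverse function of Marton's error exponent (core estimate in Theorem 2): let q be a positive probability vector on Fin M, ζ, Δ, E ∈ ℝ, ξ ≥ 0. Let p be a positive probability vector on Fin M, let r be a positive BA fixed point for p with associated dual variable a and posterior v. Define c i = Real.exp ((Real.log (a i) + ξ * Real.log (q i)) / (1 + ξ)) and p' i = c i / (∑ k, c k), and let r' be a positive BA fixed point for p' with associated dual variable a' and posterior v'. Assume the complementary-slackness condition ξ * (D(p'‖q) − D(p‖q)) = 0. Then, writing f_R(p, a) = −ζ * Δ + ∑ i, p i * Real.log (a i / p i), one has f_R(p', a') − f_R(p, a) = (ξ + 1) * D(p‖p') + ∑ j, r' j * (∑ i, v' i j * Real.log (v' i j / v i j)), and consequently f_R(p', a') − f_R(p, a) ≥ D(p‖p') ≥ (1/2) * (∑ i, |p i − p' i|)^2. -/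
lemma log_upper_aux {x : ℝ} (hx : 1 ≤ x) :
    Real.log x ≤ (x - 1) * (x + 5) / (4 * x + 2) := by
  have key : MonotoneOn (fun x : ℝ => (x - 1) * (x + 5) / (4 * x + 2) - Real.log x)
      (Set.Ici 1) := by
    apply monotoneOn_of_deriv_nonneg (convex_Ici 1)
    · apply ContinuousOn.sub
      · apply ContinuousOn.div (by fun_prop) (by fun_prop)
        intro y hy; simp only [Set.mem_Ici] at hy; nlinarith
      · apply ContinuousOn.log (by fun_prop)
        intro y hy; simp only [Set.mem_Ici] at hy; nlinarith
    · rw [interior_Ici]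
      intro y hy
      simp only [Set.mem_Ioi] at hy
      have h0 : (0:ℝ) < y := by linarith
      apply DifferentiableAt.differentiableWithinAt
      apply DifferentiableAt.sub
      · apply DifferentiableAt.div (by fun_prop) (by fun_prop)
        nlinarith
      · exact Real.differentiableAt_log h0.ne'
    · rw [interior_Ici]
      intro y hy
      simp only [Set.mem_Ioi] at hy
      have h0 : (0:ℝ) < y := by linarith
      have hden : (4 * y + 2 : ℝ) ≠ 0 := by nlinarith
      have hd : HasDerivAt (fun x : ℝ => (x - 1) * (x + 5) / (4 * x + 2) - Real.log x)
          (((1 * (y + 5) + (y - 1) * 1) * (4 * y + 2) - (y - 1) * (y + 5) * 4) / (4 * y + 2) ^ 2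
            - 1 / y) y := by
        apply HasDerivAt.sub
        · have hnum : HasDerivAt (fun x : ℝ => (x - 1) * (x + 5)) (1 * (y + 5) + (y - 1) * 1) y :=
            ((hasDerivAt_id y).sub_const 1).mul ((hasDerivAt_id y).add_const 5)
          have hde : HasDerivAt (fun x : ℝ => 4 * x + 2) 4 y := by
            simpa using ((hasDerivAt_id y).const_mul 4).add_const (2:ℝ)
          exact hnum.div hde hden
        · simpa using Real.hasDerivAt_log h0.ne'
      rw [hd.deriv]
      have heq : ((1 * (y + 5) + (y - 1) * 1) * (4 * y + 2) - (y - 1) * (y + 5) * 4) / (4 * y + 2) ^ 2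
            - 1 / y = 4 * (y - 1) ^ 3 / ((4 * y + 2) ^ 2 * y) := by
        field_simp
        ring
      rw [heq]
      apply div_nonneg (by have h := pow_nonneg (by linarith : (0:ℝ) ≤ y - 1) 3; linarith) (by positivity)
  have h1 := key (Set.mem_Ici.mpr le_rfl) (Set.mem_Ici.mpr hx) hx
  simp only [Real.log_one] at h1
  norm_num at h1
  linarith

lemma log_lower_aux {x : ℝ} (hx : 1 ≤ x) :
    3 * (x ^ 2 - 1) / (x ^ 2 + 4 * x + 1) ≤ Real.log x := by
  have key : MonotoneOn (fun x : ℝ => Real.log x - 3 * (x ^ 2 - 1) / (x ^ 2 + 4 * x + 1))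
      (Set.Ici 1) := by
    apply monotoneOn_of_deriv_nonneg (convex_Ici 1)
    · apply ContinuousOn.sub
      · apply ContinuousOn.log (by fun_prop)
        intro y hy; simp only [Set.mem_Ici] at hy; nlinarith
      · apply ContinuousOn.div (by fun_prop) (by fun_prop)
        intro y hy; simp only [Set.mem_Ici] at hy; nlinarith
    · rw [interior_Ici]
      intro y hy
      simp only [Set.mem_Ioi] at hy
      have h0 : (0:ℝ) < y := by linarith
      apply DifferentiableAt.differentiableWithinAt
      apply DifferentiableAt.sub
      · exact Real.differentiableAt_log h0.ne'
      · apply DifferentiableAt.div (by fun_prop) (by fun_prop)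
        nlinarith
    · rw [interior_Ici]
      intro y hy
      simp only [Set.mem_Ioi] at hy
      have h0 : (0:ℝ) < y := by linarith
      have hden : (y ^ 2 + 4 * y + 2 : ℝ) ≠ 0 := by nlinarith
      have hden' : (y ^ 2 + 4 * y + 1 : ℝ) ≠ 0 := by nlinarith
      have hd : HasDerivAt (fun x : ℝ => Real.log x - 3 * (x ^ 2 - 1) / (x ^ 2 + 4 * x + 1))
          (1 / y - (3 * (2 * y) * (y ^ 2 + 4 * y + 1) - 3 * (y ^ 2 - 1) * (2 * y + 4))
            / (y ^ 2 + 4 * y + 1) ^ 2) y := by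
        apply HasDerivAt.sub
        · simpa using Real.hasDerivAt_log h0.ne'
        · have h2 : HasDerivAt (fun x : ℝ => 3 * (x ^ 2 - 1)) (3 * (2 * y)) y := by
            have := ((hasDerivAt_pow 2 y).sub_const 1).const_mul 3
            simpa using this
          have h3 : HasDerivAt (fun x : ℝ => x ^ 2 + 4 * x + 1) (2 * y + 4) y := by
            have := ((hasDerivAt_pow 2 y).add (((hasDerivAt_id y).const_mul 4))).add_const 1
            simpa using this
          exact h2.div h3 hden'
      rw [hd.deriv]
      have heq : 1 / y - (3 * (2 * y) * (y ^ 2 + 4 * y + 1) - 3 * (y ^ 2 - 1) * (2 * y + 4))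
            / (y ^ 2 + 4 * y + 1) ^ 2 = (y - 1) ^ 4 / (y * (y ^ 2 + 4 * y + 1) ^ 2) := by
        field_simp
        ring
      rw [heq]
      positivity
  have h1 := key (Set.mem_Ici.mpr le_rfl) (Set.mem_Ici.mpr hx) hx
  simp only [Real.log_one] at h1
  norm_num at h1
  linarith

lemma kl_pointwise_t {t : ℝ} (ht : 0 < t) :
    3 * (t - 1) ^ 2 ≤ (2 * t + 4) * (t * Real.log t - t + 1) := by
  rcases le_total 1 t with h1 | h1
  · have hD : (0:ℝ) < t ^ 2 + 4 * t + 1 := by nlinarith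
    have h := log_lower_aux h1
    rw [div_le_iff₀ hD] at h
    have h2 : (2 * t + 4) * t * (3 * (t ^ 2 - 1)) ≤ (2 * t + 4) * t * (Real.log t * (t ^ 2 + 4 * t + 1)) := by
      apply mul_le_mul_of_nonneg_left h (by nlinarith)
    have hexp : ((2 * t + 4) * (t * Real.log t - t + 1) - 3 * (t - 1) ^ 2) * (t ^ 2 + 4 * t + 1)
        = ((2 * t + 4) * t * (Real.log t * (t ^ 2 + 4 * t + 1))
            - (2 * t + 4) * t * (3 * (t ^ 2 - 1))) + (t - 1) ^ 4 := by ring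
    nlinarith [pow_nonneg (by linarith : (0:ℝ) ≤ t - 1) 4]
  · have hs : 1 ≤ 1 / t := by rw [le_div_iff₀ ht]; linarith
    have h := log_upper_aux hs
    have hlog : Real.log (1 / t) = -Real.log t := by rw [one_div, Real.log_inv]
    rw [hlog] at h
    have hden : (0:ℝ) < 4 * (1 / t) + 2 := by positivity
    rw [le_div_iff₀ hden] at h
    -- h : -log t * (4 * (1/t) + 2) ≤ (1/t - 1) * (1/t + 5)
    have h2 : -Real.log t * (4 * (1 / t) + 2) * t ^ 2 ≤ (1 / t - 1) * (1 / t + 5) * t ^ 2 :=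
      mul_le_mul_of_nonneg_right h (by positivity)
    have e1 : -Real.log t * (4 * (1 / t) + 2) * t ^ 2 = -Real.log t * (4 * t + 2 * t ^ 2) := by
      field_simp
    have e2 : (1 / t - 1) * (1 / t + 5) * t ^ 2 = (1 - t) * (1 + 5 * t) := by
      have h1 : 1 / t - 1 = (1 - t) / t := by field_simp
      have h2 : (1:ℝ) / t + 5 = (1 + 5 * t) / t := by field_simp
      rw [h1, h2, div_mul_div_comm, div_mul_eq_mul_div, div_eq_iff (by positivity : t * t ≠ 0)]
      ring
    rw [e1, e2] at h2
    -- so 0 ≤ log t * (4t + 2t²) + (1-t)(1+5t)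
    have h3 : 0 ≤ (Real.log t * (4 * t + 2 * t ^ 2) + (1 - t) * (1 + 5 * t)) * t :=
      mul_nonneg (by linarith) ht.le
    have hexp : ((2 * t + 4) * (t * Real.log t - t + 1) - 3 * (t - 1) ^ 2) * t
        = (Real.log t * (4 * t + 2 * t ^ 2) + (1 - t) * (1 + 5 * t)) * t := by ring
    nlinarith

lemma kl_pointwise {x y : ℝ} (hx : 0 < x) (hy : 0 < y) :
    3 * (x - y) ^ 2 ≤ (2 * x + 4 * y) * (x * Real.log (x / y) - x + y) := by
  have ht : 0 < x / y := by positivity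
  have h := kl_pointwise_t ht
  have h2 := mul_le_mul_of_nonneg_right h (sq_nonneg y)
  have hx' : x = (x / y) * y := by field_simp
  have hyx : x / y * y = x := by field_simp
  have e1 : 3 * (x / y - 1) ^ 2 * y ^ 2 = 3 * (x - y) ^ 2 := by
    have : (x / y - 1) * y = x - y := by rw [sub_mul, hyx]; ring
    calc 3 * (x / y - 1) ^ 2 * y ^ 2 = 3 * ((x / y - 1) * y) ^ 2 := by ring
    _ = 3 * (x - y) ^ 2 := by rw [this]
  have e2 : (2 * (x / y) + 4) * ((x / y) * Real.log (x / y) - (x / y) + 1) * y ^ 2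
      = (2 * x + 4 * y) * (x * Real.log (x / y) - x + y) := by
    calc (2 * (x / y) + 4) * ((x / y) * Real.log (x / y) - (x / y) + 1) * y ^ 2
        = ((2 * (x / y)) * y + 4 * y) * (((x / y) * y) * Real.log (x / y) - (x / y) * y + y) := by
          ring
    _ = (2 * x + 4 * y) * (x * Real.log (x / y) - x + y) := by
          rw [mul_comm (2 * (x / y)) y, ← mul_assoc y 2 (x / y), mul_comm y 2, mul_assoc 2 y (x/y), mul_comm y (x/y), hyx]
  rw [e1, e2] at h2
  exact h2

lemma gibbs_aux_s12 {M : ℕ} (p q : Fin M → ℝ) (hp : ∀ i, 0 < p i) (hq : ∀ i, 0 < q i)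
    (h : ∑ i, q i ≤ ∑ i, p i) : 0 ≤ ∑ i, p i * Real.log (p i / q i) := by
  have key : ∀ i, p i - q i ≤ p i * Real.log (p i / q i) := by
    intro i
    have hpi := hp i
    have hqi := hq i
    have hlog : Real.log (q i / p i) ≤ q i / p i - 1 := Real.log_le_sub_one_of_pos (by positivity)
    have hrw : Real.log (q i / p i) = -Real.log (p i / q i) := by
      rw [← Real.log_inv, inv_div]
    rw [hrw] at hlog
    have := mul_le_mul_of_nonneg_left hlog (hp i).le
    have e : p i * (q i / p i - 1) = q i - p i := by field_simp
    rw [e] at this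
    nlinarith
  have hsub : ∑ i, (p i - q i) = (∑ i, p i) - ∑ i, q i := Finset.sum_sub_distrib _ _
  have hsumle := Finset.sum_le_sum (fun i (_ : i ∈ Finset.univ) => key i)
  linarith

lemma pinsker_aux {M : ℕ} (p q : Fin M → ℝ) (hp : ∀ i, 0 < p i) (hq : ∀ i, 0 < q i)
    (hp1 : ∑ i, p i = 1) (hq1 : ∑ i, q i = 1) :
    (1 / 2) * (∑ i, |p i - q i|) ^ 2 ≤ ∑ i, p i * Real.log (p i / q i) := by
  have hg : ∀ i, (0:ℝ) < (2 * p i + 4 * q i) / 3 := fun i => by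
    have := hp i; have := hq i; positivity
  have hcs := Finset.sq_sum_div_le_sum_sq_div Finset.univ (fun i => |p i - q i|)
    (fun i (_ : i ∈ Finset.univ) => hg i)
  have hgsum : ∑ i, (2 * p i + 4 * q i) / 3 = 2 := by
    rw [← Finset.sum_div]
    rw [Finset.sum_add_distrib, ← Finset.mul_sum, ← Finset.mul_sum, hp1, hq1]
    norm_num
  rw [hgsum] at hcs
  have hterm : ∀ i, |p i - q i| ^ 2 / ((2 * p i + 4 * q i) / 3)
      ≤ p i * Real.log (p i / q i) - p i + q i := by
    intro i
    rw [sq_abs, div_le_iff₀ (hg i)]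
    have := kl_pointwise (hp i) (hq i)
    nlinarith
  have hsum := Finset.sum_le_sum (fun i (_ : i ∈ Finset.univ) => hterm i)
  have hsplit : ∑ i, (p i * Real.log (p i / q i) - p i + q i)
      = ∑ i, p i * Real.log (p i / q i) := by
    rw [Finset.sum_add_distrib, Finset.sum_sub_distrib, hp1, hq1]; ring
  rw [hsplit] at hsum
  calc (1 / 2) * (∑ i, |p i - q i|) ^ 2 = (∑ i, |p i - q i|) ^ 2 / 2 := by ring
  _ ≤ ∑ i, |p i - q i| ^ 2 / ((2 * p i + 4 * q i) / 3) := hcs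
  _ ≤ ∑ i, p i * Real.log (p i / q i) := hsum


/-- Per-iteration descent estimate for the AM-CD algorithm for the inverse
function of Marton's error exponent (core estimate in Theorem 2): under the
complementary-slackness condition `ξ (D(p'‖q) − D(p‖q)) = 0`, the increase of
`f_R(p, a) = −ζΔ + ∑ p i log (a i / p i)` from `(p, a)` to `(p', a')` equals
`(ξ+1) D(p‖p') + ∑_j r' j ∑_i v' i j log (v' i j / v i j)`, and is at least
`D(p‖p') ≥ (1/2) (∑ |p i − p' i|)²`. -/
theorem amcd_descent_inverse_function (M N : ℕ) (hM : 1 ≤ M) (hN : 1 ≤ N)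
    (d : Fin M → Fin N → ℝ) (hd : ∀ i j, 0 ≤ d i j)
    (q : Fin M → ℝ) (hq : ∀ i, 0 < q i) (hq1 : ∑ i, q i = 1)
    (ζ Δ E : ℝ) (ξ : ℝ) (hξ : 0 ≤ ξ)
    (p : Fin M → ℝ) (hp : ∀ i, 0 < p i) (hp1 : ∑ i, p i = 1)
    (r : Fin N → ℝ) (hr : ∀ j, 0 < r j) (hr1 : ∑ j, r j = 1)
    (hrfix : ∀ j, r j =
      ∑ i, p i * Real.exp (-ζ * d i j) * r j / (∑ k, Real.exp (-ζ * d i k) * r k))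
    (a : Fin M → ℝ) (ha : ∀ i, a i = p i / (∑ j, Real.exp (-ζ * d i j) * r j))
    (v : Fin M → Fin N → ℝ)
    (hv : ∀ i j, v i j =
      p i * (Real.exp (-ζ * d i j) * r j / (∑ k, Real.exp (-ζ * d i k) * r k)) / r j)
    (c p' : Fin M → ℝ)
    (hc : ∀ i, c i = Real.exp ((Real.log (a i) + ξ * Real.log (q i)) / (1 + ξ)))
    (hp' : ∀ i, p' i = c i / ∑ k, c k)
    (hp'pos : ∀ i, 0 < p' i) (hp'1 : ∑ i, p' i = 1)
    (r' : Fin N → ℝ) (hr' : ∀ j, 0 < r' j) (hr'1 : ∑ j, r' j = 1)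
    (hr'fix : ∀ j, r' j =
      ∑ i, p' i * Real.exp (-ζ * d i j) * r' j / (∑ k, Real.exp (-ζ * d i k) * r' k))
    (a' : Fin M → ℝ) (ha' : ∀ i, a' i = p' i / (∑ j, Real.exp (-ζ * d i j) * r' j))
    (v' : Fin M → Fin N → ℝ)
    (hv' : ∀ i j, v' i j =
      p' i * (Real.exp (-ζ * d i j) * r' j / (∑ k, Real.exp (-ζ * d i k) * r' k)) / r' j)
    (hcs : ξ * ((∑ i, p' i * Real.log (p' i / q i)) - (∑ i, p i * Real.log (p i / q i))) = 0) :
    ((-ζ * Δ + ∑ i, p' i * Real.log (a' i / p' i)) -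
        (-ζ * Δ + ∑ i, p i * Real.log (a i / p i)) =
      (ξ + 1) * (∑ i, p i * Real.log (p i / p' i)) +
        ∑ j, r' j * ∑ i, v' i j * Real.log (v' i j / v i j)) ∧
    (∑ i, p i * Real.log (p i / p' i) ≤
        (-ζ * Δ + ∑ i, p' i * Real.log (a' i / p' i)) -
          (-ζ * Δ + ∑ i, p i * Real.log (a i / p i))) ∧
    ((1 / 2) * (∑ i, |p i - p' i|) ^ 2 ≤ ∑ i, p i * Real.log (p i / p' i)) := by
  have hMne : Nonempty (Fin M) := Fin.pos_iff_nonempty.mp hM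
  have hNne : Nonempty (Fin N) := Fin.pos_iff_nonempty.mp hN
  have hZ : ∀ i, 0 < ∑ k, Real.exp (-ζ * d i k) * r k := fun i =>
    Finset.sum_pos (fun k _ => mul_pos (Real.exp_pos _) (hr k)) Finset.univ_nonempty
  have hZ' : ∀ i, 0 < ∑ k, Real.exp (-ζ * d i k) * r' k := fun i =>
    Finset.sum_pos (fun k _ => mul_pos (Real.exp_pos _) (hr' k)) Finset.univ_nonempty
  have hcpos : ∀ i, 0 < c i := fun i => by rw [hc i]; exact Real.exp_pos _
  have hCpos : 0 < ∑ k, c k := Finset.sum_pos (fun k _ => hcpos k) Finset.univ_nonempty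
  -- log (a i / p i) = - log Z i
  have hloga : ∀ i, Real.log (a i / p i) = -Real.log (∑ k, Real.exp (-ζ * d i k) * r k) := by
    intro i
    rw [ha i, div_right_comm, div_self (hp i).ne', one_div, Real.log_inv]
  have hloga' : ∀ i, Real.log (a' i / p' i) = -Real.log (∑ k, Real.exp (-ζ * d i k) * r' k) := by
    intro i
    rw [ha' i, div_right_comm, div_self (hp'pos i).ne', one_div, Real.log_inv]
  have hsumloga : ∑ i, p i * Real.log (a i / p i)
      = -∑ i, p i * Real.log (∑ k, Real.exp (-ζ * d i k) * r k) := by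
    rw [← Finset.sum_neg_distrib]
    exact Finset.sum_congr rfl fun i _ => by rw [hloga i]; ring
  have hsumloga' : ∑ i, p' i * Real.log (a' i / p' i)
      = -∑ i, p' i * Real.log (∑ k, Real.exp (-ζ * d i k) * r' k) := by
    rw [← Finset.sum_neg_distrib]
    exact Finset.sum_congr rfl fun i _ => by rw [hloga' i]; ring
  -- log Z i in terms of p, q, p', C
  have hlogZ : ∀ i, Real.log (∑ k, Real.exp (-ζ * d i k) * r k)
      = Real.log (p i) + ξ * Real.log (q i) - (1 + ξ) * Real.log (p' i)
        - (1 + ξ) * Real.log (∑ k, c k) := by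
    intro i
    have h1ξ : (0:ℝ) < 1 + ξ := by linarith
    have e1 : Real.log (p' i)
        = (Real.log (a i) + ξ * Real.log (q i)) / (1 + ξ) - Real.log (∑ k, c k) := by
      rw [hp' i, Real.log_div (hcpos i).ne' hCpos.ne', hc i, Real.log_exp]
    have e2 : Real.log (a i)
        = Real.log (p i) - Real.log (∑ k, Real.exp (-ζ * d i k) * r k) := by
      rw [ha i, Real.log_div (hp i).ne' (hZ i).ne']
    rw [e2] at e1
    generalize hLZ : Real.log (∑ k, Real.exp (-ζ * d i k) * r k) = LZ at e1 ⊢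
    have e3 : (1 + ξ) * Real.log (p' i)
        = Real.log (p i) - LZ + ξ * Real.log (q i) - (1 + ξ) * Real.log (∑ k, c k) := by
      rw [e1]
      field_simp
    linarith [e3]
  have hexpand : ∀ w : Fin M → ℝ, (∑ i, w i = 1) →
      ∑ i, w i * Real.log (∑ k, Real.exp (-ζ * d i k) * r k)
      = (∑ i, w i * Real.log (p i)) + ξ * (∑ i, w i * Real.log (q i))
        - (1 + ξ) * (∑ i, w i * Real.log (p' i)) - (1 + ξ) * Real.log (∑ k, c k) := by
    intro w hw
    have step : ∀ i : Fin M, w i * Real.log (∑ k, Real.exp (-ζ * d i k) * r k)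
        = w i * Real.log (p i) + ξ * (w i * Real.log (q i))
          - (1 + ξ) * (w i * Real.log (p' i)) - (1 + ξ) * Real.log (∑ k, c k) * w i :=
      fun i => by rw [hlogZ i]; ring
    rw [Finset.sum_congr rfl fun i _ => step i, Finset.sum_sub_distrib, Finset.sum_sub_distrib,
      Finset.sum_add_distrib, ← Finset.mul_sum, ← Finset.mul_sum, ← Finset.mul_sum, hw]
    ring
  -- v simplifications
  have hvsimp : ∀ i j, v i j
      = p i * Real.exp (-ζ * d i j) / (∑ k, Real.exp (-ζ * d i k) * r k) := by
    intro i j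
    rw [hv i j]
    have e : p i * (Real.exp (-ζ * d i j) * r j / (∑ k, Real.exp (-ζ * d i k) * r k)) / r j
        = (p i * Real.exp (-ζ * d i j) / (∑ k, Real.exp (-ζ * d i k) * r k)) * (r j / r j) := by
      ring
    rw [e, div_self (hr j).ne', mul_one]
  have hv'simp : ∀ i j, v' i j
      = p' i * Real.exp (-ζ * d i j) / (∑ k, Real.exp (-ζ * d i k) * r' k) := by
    intro i j
    rw [hv' i j]
    have e : p' i * (Real.exp (-ζ * d i j) * r' j / (∑ k, Real.exp (-ζ * d i k) * r' k)) / r' j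
        = (p' i * Real.exp (-ζ * d i j) / (∑ k, Real.exp (-ζ * d i k) * r' k)) * (r' j / r' j) := by
      ring
    rw [e, div_self (hr' j).ne', mul_one]
  have hvpos : ∀ i j, 0 < v i j := by
    intro i j
    rw [hvsimp i j]
    exact div_pos (mul_pos (hp i) (Real.exp_pos _)) (hZ i)
  have hv'pos : ∀ i j, 0 < v' i j := by
    intro i j
    rw [hv'simp i j]
    exact div_pos (mul_pos (hp'pos i) (Real.exp_pos _)) (hZ' i)
  -- columns of v, v' sum to 1
  have hsumv : ∀ j, ∑ i, v i j = 1 := by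
    intro j
    have h := hrfix j
    have e : ∀ i : Fin M, p i * Real.exp (-ζ * d i j) * r j / (∑ k, Real.exp (-ζ * d i k) * r k)
        = v i j * r j := fun i => by rw [hvsimp i j]; ring
    rw [Finset.sum_congr rfl fun i _ => e i, ← Finset.sum_mul] at h
    have h2 : ((∑ i, v i j) - 1) * r j = 0 := by linear_combination -h
    rcases mul_eq_zero.mp h2 with h3 | h3
    · linarith
    · exact absurd h3 (hr j).ne'
  have hsumv' : ∀ j, ∑ i, v' i j = 1 := by
    intro j
    have h := hr'fix j
    have e : ∀ i : Fin M, p' i * Real.exp (-ζ * d i j) * r' j / (∑ k, Real.exp (-ζ * d i k) * r' k)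
        = v' i j * r' j := fun i => by rw [hv'simp i j]; ring
    rw [Finset.sum_congr rfl fun i _ => e i, ← Finset.sum_mul] at h
    have h2 : ((∑ i, v' i j) - 1) * r' j = 0 := by linear_combination -h
    rcases mul_eq_zero.mp h2 with h3 | h3
    · linarith
    · exact absurd h3 (hr' j).ne'
  -- marginal: ∑ j r' j v' i j = p' i
  have hmarg : ∀ i, ∑ j, r' j * v' i j = p' i := by
    intro i
    have e : ∀ j : Fin N, r' j * v' i j
        = (p' i / (∑ k, Real.exp (-ζ * d i k) * r' k)) * (Real.exp (-ζ * d i j) * r' j) :=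
      fun j => by rw [hv'simp i j]; ring
    rw [Finset.sum_congr rfl fun j _ => e j, ← Finset.mul_sum]
    exact div_mul_cancel₀ _ (hZ' i).ne'
  -- log ratio is independent of j
  have hlograt : ∀ i j, Real.log (v' i j / v i j)
      = Real.log (p' i) + Real.log (∑ k, Real.exp (-ζ * d i k) * r k)
        - Real.log (p i) - Real.log (∑ k, Real.exp (-ζ * d i k) * r' k) := by
    intro i j
    have hE : (0:ℝ) < Real.exp (-ζ * d i j) := Real.exp_pos _
    rw [hv'simp i j, hvsimp i j,
      Real.log_div (div_pos (mul_pos (hp'pos i) hE) (hZ' i)).ne'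
        (div_pos (mul_pos (hp i) hE) (hZ i)).ne',
      Real.log_div (mul_pos (hp'pos i) hE).ne' (hZ' i).ne',
      Real.log_div (mul_pos (hp i) hE).ne' (hZ i).ne',
      Real.log_mul (hp'pos i).ne' hE.ne', Real.log_mul (hp i).ne' hE.ne']
    ring
  -- the double-sum term
  have hS : ∑ j, r' j * ∑ i, v' i j * Real.log (v' i j / v i j)
      = ∑ i, p' i * (Real.log (p' i) + Real.log (∑ k, Real.exp (-ζ * d i k) * r k)
          - Real.log (p i) - Real.log (∑ k, Real.exp (-ζ * d i k) * r' k)) := by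
    have e1 : ∀ j : Fin N, r' j * ∑ i, v' i j * Real.log (v' i j / v i j)
        = ∑ i, (Real.log (p' i) + Real.log (∑ k, Real.exp (-ζ * d i k) * r k)
            - Real.log (p i) - Real.log (∑ k, Real.exp (-ζ * d i k) * r' k)) * (r' j * v' i j) := by
      intro j
      rw [Finset.mul_sum]
      exact Finset.sum_congr rfl fun i _ => by rw [hlograt i j]; ring
    rw [Finset.sum_congr rfl fun j _ => e1 j, Finset.sum_comm]
    exact Finset.sum_congr rfl fun i _ => by rw [← Finset.mul_sum, hmarg i]; ring
  have hSsplit : ∑ i, p' i * (Real.log (p' i) + Real.log (∑ k, Real.exp (-ζ * d i k) * r k)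
          - Real.log (p i) - Real.log (∑ k, Real.exp (-ζ * d i k) * r' k))
      = (∑ i, p' i * Real.log (p' i))
        + (∑ i, p' i * Real.log (∑ k, Real.exp (-ζ * d i k) * r k))
        - (∑ i, p' i * Real.log (p i))
        - (∑ i, p' i * Real.log (∑ k, Real.exp (-ζ * d i k) * r' k)) := by
    calc ∑ i, p' i * (Real.log (p' i) + Real.log (∑ k, Real.exp (-ζ * d i k) * r k)
            - Real.log (p i) - Real.log (∑ k, Real.exp (-ζ * d i k) * r' k))
        = ∑ i, (p' i * Real.log (p' i) + p' i * Real.log (∑ k, Real.exp (-ζ * d i k) * r k)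
            - p' i * Real.log (p i) - p' i * Real.log (∑ k, Real.exp (-ζ * d i k) * r' k)) :=
          Finset.sum_congr rfl fun i _ => by ring
      _ = _ := by
          rw [Finset.sum_sub_distrib, Finset.sum_sub_distrib, Finset.sum_add_distrib]
  have hD : ∑ i, p i * Real.log (p i / p' i)
      = (∑ i, p i * Real.log (p i)) - (∑ i, p i * Real.log (p' i)) := by
    rw [← Finset.sum_sub_distrib]
    exact Finset.sum_congr rfl fun i _ => by
      rw [Real.log_div (hp i).ne' (hp'pos i).ne']; ring
  have hcs1 : ∑ i, p' i * Real.log (p' i / q i)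
      = (∑ i, p' i * Real.log (p' i)) - (∑ i, p' i * Real.log (q i)) := by
    rw [← Finset.sum_sub_distrib]
    exact Finset.sum_congr rfl fun i _ => by
      rw [Real.log_div (hp'pos i).ne' (hq i).ne']; ring
  have hcs2 : ∑ i, p i * Real.log (p i / q i)
      = (∑ i, p i * Real.log (p i)) - (∑ i, p i * Real.log (q i)) := by
    rw [← Finset.sum_sub_distrib]
    exact Finset.sum_congr rfl fun i _ => by
      rw [Real.log_div (hp i).ne' (hq i).ne']; ring
  rw [hcs1, hcs2] at hcs
  have hEQ : (-ζ * Δ + ∑ i, p' i * Real.log (a' i / p' i)) -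
        (-ζ * Δ + ∑ i, p i * Real.log (a i / p i)) =
      (ξ + 1) * (∑ i, p i * Real.log (p i / p' i)) +
        ∑ j, r' j * ∑ i, v' i j * Real.log (v' i j / v i j) := by
    rw [hsumloga, hsumloga', hS, hSsplit, hD, hexpand p hp1, hexpand p' hp'1]
    linear_combination hcs
  have hDge : 0 ≤ ∑ i, p i * Real.log (p i / p' i) :=
    gibbs_aux_s12 p p' hp hp'pos (by rw [hp1, hp'1])
  have hSge : 0 ≤ ∑ j, r' j * ∑ i, v' i j * Real.log (v' i j / v i j) := by
    apply Finset.sum_nonneg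
    intro j _
    exact mul_nonneg (hr' j).le
      (gibbs_aux_s12 (fun i => v' i j) (fun i => v i j) (fun i => hv'pos i j) (fun i => hvpos i j)
        (by rw [hsumv j, hsumv' j]))
  refine ⟨hEQ, by nlinarith [mul_nonneg hξ hDge], pinsker_aux p p' hp hp'pos hp1 hp'1⟩
end

section
/- The BA fixed point yields the optimal dual variable for fixed ζ: let ζ ∈ ℝ, let p be a positive probability vector on Fin M, let r be a positive BA fixed point for p, and set a* i = p i / (∑ j, Real.exp (−ζ * d i j) * r j). Then for every a : Fin M → ℝ with a i > 0 for all i and ∑ i, a i * Real.exp (−ζ * d i j) ≤ 1 for every j, one has ∑ i, p i * Real.log (a i) ≤ ∑ i, p i * Real.log (a* i). -/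
/-! With `D i = ∑ j, exp (-ζ * d i j) * r j` we have `a* i = p i / D i`, and `log x ≤ x - 1`
at `x = a i * D i / p i` gives `p i * log (a i) ≤ p i * log (a* i) + a i * D i - p i`.
Summing over `i` and exchanging the order of summation,
`∑ i, a i * D i = ∑ j, (∑ i, a i * exp (-ζ * d i j)) * r j`,
which the dual constraints bound by `∑ j, r j = 1 = ∑ i, p i`. -/

open Finset Real

theorem Real.mul_log_le_mul_log_div_add_sub {p a D : ℝ} (hp : 0 < p) (ha : 0 < a) (hD : 0 < D) :
    p * log a ≤ p * log (p / D) + (a * D - p) := by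
  have h := mul_le_mul_of_nonneg_left
    (log_le_sub_one_of_pos (by positivity : 0 < a * D / p)) hp.le
  rw [log_div (by positivity) hp.ne', log_mul ha.ne' hD.ne', mul_sub_one,
    mul_div_cancel₀ _ hp.ne'] at h
  rw [log_div hp.ne' hD.ne']
  linarith

theorem Finset.sum_mul_sum_mul_le_sum {ι κ : Type*} [Fintype ι] [Fintype κ] {a : ι → ℝ}
    {K : ι → κ → ℝ} {r : κ → ℝ} (hr : ∀ j, 0 ≤ r j) (hcol : ∀ j, ∑ i, a i * K i j ≤ 1) :
    ∑ i, a i * ∑ j, K i j * r j ≤ ∑ j, r j :=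
  calc ∑ i, a i * ∑ j, K i j * r j = ∑ j, (∑ i, a i * K i j) * r j := by
        simp_rw [mul_sum, sum_mul, mul_assoc]
        exact sum_comm
    _ ≤ ∑ j, r j := sum_le_sum fun j _ => mul_le_of_le_one_left (hr j) (hcol j)

theorem sum_mul_log_le_of_dual_feasible {ι κ : Type*} [Fintype ι] [Fintype κ]
    {p a : ι → ℝ} {K : ι → κ → ℝ} {r : κ → ℝ} (hp : ∀ i, 0 < p i) (hp1 : ∑ i, p i = 1)
    (hr : ∀ j, 0 ≤ r j) (hr1 : ∑ j, r j ≤ 1) (hD : ∀ i, 0 < ∑ j, K i j * r j) (ha : ∀ i, 0 < a i)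
    (hcol : ∀ j, ∑ i, a i * K i j ≤ 1) :
    ∑ i, p i * log (a i) ≤ ∑ i, p i * log (p i / ∑ j, K i j * r j) :=
  calc ∑ i, p i * log (a i)
      ≤ ∑ i, (p i * log (p i / ∑ j, K i j * r j) + (a i * ∑ j, K i j * r j - p i)) :=
        sum_le_sum fun i _ => mul_log_le_mul_log_div_add_sub (hp i) (ha i) (hD i)
    _ = ∑ i, p i * log (p i / ∑ j, K i j * r j)
          + (∑ i, a i * ∑ j, K i j * r j - 1) := by
        rw [sum_add_distrib, sum_sub_distrib, hp1]
    _ ≤ ∑ i, p i * log (p i / ∑ j, K i j * r j) := by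
        linarith [sum_mul_sum_mul_le_sum hr hcol]

theorem ba_fixed_point_optimal_dual_general (M N : ℕ) (hN : 1 ≤ N)
    (d : Fin M → Fin N → ℝ)
    (ζ : ℝ)
    (p : Fin M → ℝ) (hp : ∀ i, 0 < p i) (hp1 : ∑ i, p i = 1)
    (r : Fin N → ℝ) (hr : ∀ j, 0 < r j) (hr1 : ∑ j, r j = 1)
    (astar : Fin M → ℝ)
    (hastar : ∀ i, astar i = p i / (∑ j, Real.exp (-ζ * d i j) * r j)) :
    ∀ a : Fin M → ℝ, (∀ i, 0 < a i) →
      (∀ j, ∑ i, a i * Real.exp (-ζ * d i j) ≤ 1) →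
      ∑ i, p i * Real.log (a i) ≤ ∑ i, p i * Real.log (astar i) := by
  intro a ha hcol
  have hD : ∀ i, 0 < ∑ j, exp (-ζ * d i j) * r j := fun i =>
    sum_pos (fun j _ => mul_pos (exp_pos _) (hr j))
      (univ_nonempty_iff.mpr (Fin.pos_iff_nonempty.mp hN))
  simp_rw [hastar]
  exact sum_mul_log_le_of_dual_feasible hp hp1 (fun j => (hr j).le) hr1.le hD ha hcol

/-- The BA fixed point yields the optimal dual variable for fixed `ζ`: with
`a* i = p i / ∑ j, exp(−ζ d i j) * r j` for a positive BA fixed point `r` of `p`, every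
positive `a` satisfying the dual inequality constraints has
`∑ i, p i * log (a i) ≤ ∑ i, p i * log (a* i)`. -/
theorem ba_fixed_point_optimal_dual (M N : ℕ) (hM : 1 ≤ M) (hN : 1 ≤ N)
    (d : Fin M → Fin N → ℝ) (hd : ∀ i j, 0 ≤ d i j)
    (ζ : ℝ)
    (p : Fin M → ℝ) (hp : ∀ i, 0 < p i) (hp1 : ∑ i, p i = 1)
    (r : Fin N → ℝ) (hr : ∀ j, 0 < r j) (hr1 : ∑ j, r j = 1)
    (hrfix : ∀ j, r j =
      ∑ i, p i * Real.exp (-ζ * d i j) * r j / (∑ k, Real.exp (-ζ * d i k) * r k))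
    (astar : Fin M → ℝ)
    (hastar : ∀ i, astar i = p i / (∑ j, Real.exp (-ζ * d i j) * r j)) :
    ∀ a : Fin M → ℝ, (∀ i, 0 < a i) →
      (∀ j, ∑ i, a i * Real.exp (-ζ * d i j) ≤ 1) →
      ∑ i, p i * Real.log (a i) ≤ ∑ i, p i * Real.log (astar i) :=
  ba_fixed_point_optimal_dual_general M N hN d ζ p hp hp1 r hr hr1 astar hastar
end
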